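/- Size and expansion of S ∪ B(S). Let ε > 0 and suppose G is a (c,d)-regular (⌊k/(2ε)+1⌋, 1/2+ε)-expander, and let S ⊆ X with |S| ≤ k. Then |S ∪ B(S)| ≤ ⌊|S|/(2ε)⌋, and consequently every subset A ⊆ S ∪ B(S) satisfies |Γ(A)| ≥ (1/2+ε)·c·|A|. -/

import Mathlib

open Finset

namespace MP

/-- Neighborhood of a left vertex `i ∈ X`: the measurements involving `i`. -/
def nhdX {n m : ℕ} (A : Fin m → Fin n → Bool) (i : Fin n) : Finset (Fin m) :=
  Finset.univ.filter (fun j => A j i = true)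

/-- Neighborhood of a right vertex `j ∈ Y`. -/
def nhdY {n m : ℕ} (A : Fin m → Fin n → Bool) (j : Fin m) : Finset (Fin n) :=
  Finset.univ.filter (fun i => A j i = true)

/-- `Γ(S)`, the set of neighbors of `S ⊆ X`. -/
def Gam {n m : ℕ} (A : Fin m → Fin n → Bool) (S : Finset (Fin n)) : Finset (Fin m) :=
  S.biUnion (nhdX A)

/-- The measurement vector `y = A x`. -/
noncomputable def yvec {n m : ℕ} (A : Fin m → Fin n → Bool) (x : Fin n → ℝ) (j : Fin m) : ℝ :=
  ∑ i ∈ nhdY A j, x i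

/-- Message from measurement `j` to variable `i`, given current variable messages `z`:
`y_j - ∑_{k ∈ N_y(j) \ {i}} z_k`. -/
noncomputable def msgY {n m : ℕ} (A : Fin m → Fin n → Bool) (x z : Fin n → ℝ)
    (j : Fin m) (i : Fin n) : ℝ :=
  yvec A x j - ∑ k ∈ (nhdY A j).erase i, z k

/-- The algorithm's estimate `x̂^s` (equal to the variable-to-check message `m_{i→j}^s`,
which does not depend on `j`).  At odd times it is the min of incoming check messages;
at even times `s+1` it is `max(0, max of incoming check messages)`. -/
noncomputable def xhat {n m : ℕ} (A : Fin m → Fin n → Bool) (x : Fin n → ℝ) :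
    ℕ → Fin n → ℝ
  | 0 => fun _ => 0
  | s + 1 => fun i =>
      if Even (s + 1) then
        max 0 (sSup ((fun l => msgY A x (xhat A x s) l i) '' (↑(nhdX A i) : Set (Fin m))))
      else
        sInf ((fun l => msgY A x (xhat A x s) l i) '' (↑(nhdX A i) : Set (Fin m)))

/-- The variable-to-check message `m_{i→j}^s` (independent of `j`). -/
noncomputable def mXY {n m : ℕ} (A : Fin m → Fin n → Bool) (x : Fin n → ℝ)
    (s : ℕ) (i : Fin n) (_j : Fin m) : ℝ := xhat A x s i

/-- The check-to-variable message `m_{j→i}^s`. -/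
noncomputable def mYX {n m : ℕ} (A : Fin m → Fin n → Bool) (x : Fin n → ℝ)
    (s : ℕ) (j : Fin m) (i : Fin n) : ℝ := msgY A x (xhat A x s) j i

/-- `G` is `(c,d)`-regular. -/
def IsRegular {n m : ℕ} (A : Fin m → Fin n → Bool) (c d : ℕ) : Prop :=
  (∀ i, (nhdX A i).card = c) ∧ (∀ j, (nhdY A j).card = d)

/-- `G` is a `(kk, α)`-expander (w.r.t. left degree `c`). -/
def IsExpander {n m : ℕ} (A : Fin m → Fin n → Bool) (c kk : ℕ) (α : ℝ) : Prop :=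
  ∀ S : Finset (Fin n), S.card ≤ kk → α * c * S.card ≤ ((Gam A S).card : ℝ)

/-- ℓ¹ norm on `ℝⁿ`. -/
noncomputable def l1 {n : ℕ} (u : Fin n → ℝ) : ℝ := ∑ i, |u i|

/-- `z` has at most `k` nonzero entries. -/
def IsKSparse {n : ℕ} (k : ℕ) (z : Fin n → ℝ) : Prop :=
  (Finset.univ.filter (fun i => z i ≠ 0)).card ≤ k

/-- `xk` is a best `k`-sparse nonnegative approximation of `x` in ℓ¹. -/
def BestKSparse {n : ℕ} (k : ℕ) (x xk : Fin n → ℝ) : Prop :=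
  (∀ i, 0 ≤ xk i) ∧ IsKSparse k xk ∧
    ∀ z : Fin n → ℝ, (∀ i, 0 ≤ z i) → IsKSparse k z →
      l1 (fun i => x i - xk i) ≤ l1 (fun i => x i - z i)


/-- `B(S) = {i ∈ X \ S : |N_x(i) ∩ Γ(S)| > c/2}`. -/
noncomputable def Bset {n m : ℕ} (A : Fin m → Fin n → Bool) (c : ℕ) (S : Finset (Fin n)) :
    Finset (Fin n) :=
  (Finset.univ \ S).filter (fun i => (c : ℝ) / 2 < ((nhdX A i ∩ Gam A S).card : ℝ))

end MP

/-!
Every vertex of `B(S)` has fewer than `c/2` neighbours outside `Γ(S)`, so a set `T` with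
`S ⊆ T ⊆ S ∪ B(S)` has `|Γ(T)| ≤ c|S| + (c/2)|T \ S| = (c/2)(|S| + |T|)`. If `|T|` is within the
expansion range, comparing with `|Γ(T)| ≥ (1/2 + ε)c|T|` gives `2ε|T| ≤ |S|`. Were `S ∪ B(S)`
larger than `⌊|S|/(2ε)⌋`, an intermediate `T` of size `⌊|S|/(2ε)⌋ + 1` would violate this.
-/

namespace MP

variable {n m c : ℕ} {A : Fin m → Fin n → Bool}

lemma card_Gam_le (hdeg : ∀ i, (nhdX A i).card ≤ c) (S : Finset (Fin n)) :
    (Gam A S).card ≤ c * S.card :=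
  calc (Gam A S).card ≤ ∑ i ∈ S, (nhdX A i).card := card_biUnion_le
    _ ≤ ∑ _i ∈ S, c := sum_le_sum fun i _ => hdeg i
    _ = c * S.card := by rw [sum_const, smul_eq_mul, mul_comm]

lemma IsExpander.le_one {K : ℕ} {α : ℝ} (hexp : IsExpander A c K α)
    (hdeg : ∀ i, (nhdX A i).card ≤ c) (hc : 0 < c) (hK : 0 < K) (i : Fin n) : α ≤ 1 := by
  have hsingle := hexp {i} (by rwa [card_singleton])
  have hGam : ((Gam A {i}).card : ℝ) ≤ c := by
    exact_mod_cast (card_Gam_le hdeg {i}).trans_eq (by simp)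
  rw [card_singleton, Nat.cast_one, mul_one] at hsingle
  have hcR : (0 : ℝ) < c := by exact_mod_cast hc
  nlinarith

lemma Gam_subset_union_biUnion_sdiff (S T : Finset (Fin n)) :
    Gam A T ⊆ Gam A S ∪ (T \ S).biUnion fun i => nhdX A i \ Gam A S := by
  intro j hj
  obtain ⟨i, hiT, hji⟩ := mem_biUnion.1 hj
  by_cases hjS : j ∈ Gam A S
  · exact mem_union_left _ hjS
  · have hiS : i ∉ S := fun hiS => hjS (mem_biUnion.2 ⟨i, hiS, hji⟩)
    exact mem_union_right _
      (mem_biUnion.2 ⟨i, mem_sdiff.2 ⟨hiT, hiS⟩, mem_sdiff.2 ⟨hji, hjS⟩⟩)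

lemma card_nhdX_sdiff_Gam_le_of_mem_Bset (hdeg : ∀ i, (nhdX A i).card = c)
    {S : Finset (Fin n)} {i : Fin n} (hi : i ∈ Bset A c S) :
    ((nhdX A i \ Gam A S).card : ℝ) ≤ c / 2 := by
  have hsplit : ((nhdX A i \ Gam A S).card : ℝ) + (nhdX A i ∩ Gam A S).card = c := by
    exact_mod_cast (card_sdiff_add_card_inter _ _).trans (hdeg i)
  linarith [(mem_filter.1 hi).2]

lemma card_Gam_le_of_subset_union_Bset (hdeg : ∀ i, (nhdX A i).card = c)
    {S T : Finset (Fin n)} (hT : T ⊆ S ∪ Bset A c S) :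
    ((Gam A T).card : ℝ) ≤ c * S.card + c / 2 * (T \ S).card := by
  have hTS : ∀ i ∈ T \ S, i ∈ Bset A c S := fun i hi =>
    (mem_union.1 (hT (mem_sdiff.1 hi).1)).resolve_left (mem_sdiff.1 hi).2
  set D := (T \ S).biUnion fun i => nhdX A i \ Gam A S
  have hD : (D.card : ℝ) ≤ c / 2 * (T \ S).card :=
    calc _ ≤ ∑ i ∈ T \ S, ((nhdX A i \ Gam A S).card : ℝ) := by exact_mod_cast card_biUnion_le
      _ ≤ ∑ _i ∈ T \ S, (c / 2 : ℝ) :=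
          sum_le_sum fun i hi => card_nhdX_sdiff_Gam_le_of_mem_Bset hdeg (hTS i hi)
      _ = c / 2 * (T \ S).card := by rw [sum_const, nsmul_eq_mul, mul_comm]
  have hGamS : ((Gam A S).card : ℝ) ≤ c * S.card := by
    exact_mod_cast card_Gam_le (fun i => (hdeg i).le) S
  have hcover : ((Gam A T).card : ℝ) ≤ (Gam A S).card + D.card := by
    exact_mod_cast (card_le_card (Gam_subset_union_biUnion_sdiff S T)).trans (card_union_le _ _)
  linarith

lemma two_mul_card_le_of_subset_union_Bset {K : ℕ} {ε : ℝ}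
    (hexp : IsExpander A c K (1 / 2 + ε)) (hdeg : ∀ i, (nhdX A i).card = c) (hc : 0 < c)
    {S T : Finset (Fin n)} (hST : S ⊆ T) (hT : T ⊆ S ∪ Bset A c S) (hTK : T.card ≤ K) :
    2 * ε * T.card ≤ S.card := by
  have hupper := card_Gam_le_of_subset_union_Bset hdeg hT
  have hlower := hexp T hTK
  rw [card_sdiff_of_subset hST, Nat.cast_sub (card_le_card hST)] at hupper
  have hcR : (0 : ℝ) < c := by exact_mod_cast hc
  nlinarith

end MP

open MP Finset

theorem size_and_expansion_of_SB_general (n m c d k : ℕ)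
    (hn : 0 < n) (hc : 0 < c)
    (A : Fin m → Fin n → Bool) (ε : ℝ) (hε : 0 < ε)
    (hreg : IsRegular A c d)
    (hexp : IsExpander A c (Nat.floor ((k : ℝ) / (2 * ε) + 1)) (1 / 2 + ε))
    (S : Finset (Fin n)) (hS : S.card ≤ k) :
    (S ∪ Bset A c S).card ≤ Nat.floor ((S.card : ℝ) / (2 * ε)) ∧
    ∀ A' : Finset (Fin n), A' ⊆ S ∪ Bset A c S →
      (1 / 2 + ε) * (c : ℝ) * (A'.card : ℝ) ≤ ((Gam A A').card : ℝ) := by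
  obtain ⟨hdeg, -⟩ := hreg
  set t := ⌊(S.card : ℝ) / (2 * ε)⌋₊
  have htK : t + 1 ≤ ⌊(k : ℝ) / (2 * ε) + 1⌋₊ := by
    rw [Nat.floor_add_one (by positivity)]
    exact Nat.succ_le_succ (Nat.floor_le_floor (by gcongr))
  have hε_half : ε ≤ 1 / 2 := by
    linarith [hexp.le_one (fun i => (hdeg i).le) hc (by omega) ⟨0, hn⟩]
  have hSt : S.card ≤ t :=
    Nat.le_floor ((le_div_iff₀ (by positivity)).2 (by nlinarith [S.card.cast_nonneg (α := ℝ)]))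
  have hU : (S ∪ Bset A c S).card ≤ t := by
    by_contra! hlt
    obtain ⟨T, hST, hTU, hTcard⟩ :=
      exists_subsuperset_card_eq subset_union_left (hSt.trans t.le_succ) hlt
    have hT := two_mul_card_le_of_subset_union_Bset hexp hdeg hc hST hTU (hTcard ▸ htK)
    have : t + 1 ≤ t := Nat.le_floor ((le_div_iff₀ (by positivity)).2 (by
      rw [← Nat.succ_eq_add_one, ← hTcard]; linarith))
    omega
  exact ⟨hU, fun A' hA' => hexp A' ((card_le_card hA').trans (hU.trans (by omega)))⟩

/-- **Size and expansion of `S ∪ B(S)`.** If `G` is a `(c,d)`-regular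
`(⌊k/(2ε)+1⌋, 1/2+ε)`-expander and `|S| ≤ k`, then `|S ∪ B(S)| ≤ ⌊|S|/(2ε)⌋` and every
`A' ⊆ S ∪ B(S)` satisfies `|Γ(A')| ≥ (1/2+ε)c|A'|`. -/
theorem size_and_expansion_of_SB (n m c d k : ℕ)
    (hn : 0 < n) (hm : 0 < m) (hc : 0 < c) (hd : 0 < d) (hk : 0 < k)
    (A : Fin m → Fin n → Bool) (ε : ℝ) (hε : 0 < ε)
    (hreg : IsRegular A c d)
    (hexp : IsExpander A c (Nat.floor ((k : ℝ) / (2 * ε) + 1)) (1 / 2 + ε))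
    (S : Finset (Fin n)) (hS : S.card ≤ k) :
    (S ∪ Bset A c S).card ≤ Nat.floor ((S.card : ℝ) / (2 * ε)) ∧
    ∀ A' : Finset (Fin n), A' ⊆ S ∪ Bset A c S →
      (1 / 2 + ε) * (c : ℝ) * (A'.card : ℝ) ≤ ((Gam A A').card : ℝ) :=
  size_and_expansion_of_SB_general n m c d k hn hc A ε hε hreg hexp S hS
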